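/- Let u ∈ L¹(𝔻) satisfy the Bekollé–Bonami condition B₂, and for each a ∈ 𝔻 let K_u(·,a) ∈ A²(u) denote the reproducing kernel of A²(u) at a (i.e. ⟨f, K_u(·,a)⟩_{A²(u)} = f(a) for all f ∈ A²(u)). Then the normalized reproducing kernels K_u(·,a)/‖K_u(·,a)‖_{A²(u)} converge to zero weakly in A²(u) as |a| → 1⁻; that is, ⟨f, K_u(·,a)/‖K_u(·,a)‖_{A²(u)}⟩_{A²(u)} → 0 for every f ∈ A²(u). -/

import Mathlib

open MeasureTheory Complex Set Filter
open scoped ENNReal ComplexConjugate NNReal Topology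

noncomputable section

/-- The open unit disc in `ℂ`. -/
def unitDisc : Set ℂ := Metric.ball 0 1

/-- The normalized area (Lebesgue) measure on `ℂ`; the unit disc has mass `1`. -/
def dA : Measure ℂ := (ENNReal.ofReal Real.pi)⁻¹ • volume

/-- The pseudohyperbolic disc `D_r(a) = {z ∈ 𝔻 : |z - a| / |1 - conj a * z| < r}`. -/
def pDisc (r : ℝ) (a : ℂ) : Set ℂ :=
  {z ∈ unitDisc | ‖z - a‖ / ‖1 - conj a * z‖ < r}

/-- The Carleson square over the boundary arc centered at angle `θ` of length `ℓ`. -/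
def carlesonSq (θ ℓ : ℝ) : Set ℂ :=
  {z : ℂ | ∃ ρ t : ℝ, 1 - ℓ / (2 * Real.pi) ≤ ρ ∧ ρ < 1 ∧
    t ∈ Set.Icc (θ - ℓ / 2) (θ + ℓ / 2) ∧ z = (ρ : ℂ) * Complex.exp (t * Complex.I)}

/-- The Bekollé–Bonami condition `B₂`. -/
def BekolleBonami2 (u : ℂ → ℝ) : Prop :=
  ∃ C : ℝ, 0 < C ∧ ∀ θ ℓ : ℝ, 0 < ℓ → ℓ ≤ 2 * Real.pi →
    ((dA (carlesonSq θ ℓ)) ^ 2)⁻¹ *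
        (∫⁻ z in carlesonSq θ ℓ, ENNReal.ofReal (u z) ∂dA) *
        (∫⁻ z in carlesonSq θ ℓ, ENNReal.ofReal (u z)⁻¹ ∂dA) ≤ ENNReal.ofReal C

/-- The squared norm `‖f‖²_{A²(u)} = ∫_𝔻 |f|² u dA` (as an extended real). -/
def bnorm2 (u : ℂ → ℝ) (f : ℂ → ℂ) : ℝ≥0∞ :=
  ∫⁻ z in unitDisc, (‖f z‖₊ : ℝ≥0∞) ^ 2 * ENNReal.ofReal (u z) ∂dA

/-- Membership in the weighted Bergman space `A²(u)`. -/
def IsA2 (u : ℂ → ℝ) (f : ℂ → ℂ) : Prop :=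
  DifferentiableOn ℂ f unitDisc ∧ bnorm2 u f < ⊤

/-- The norm in `A²(u)`. -/
def Anorm (u : ℂ → ℝ) (f : ℂ → ℂ) : ℝ := Real.sqrt (bnorm2 u f).toReal

/-- The measure `μ = u dA`. -/
def wMeasure (u : ℂ → ℝ) : Measure ℂ :=
  dA.withDensity fun z => ENNReal.ofReal (u z)

/-- The Bergman kernel `B_a(z) = (1 - conj a * z)⁻²`. -/
def bergB (a : ℂ) : ℂ → ℂ := fun z => ((1 - conj a * z) ^ 2)⁻¹

/-- The normalized Bergman kernel `b_a(z) = (1 - |a|²)(1 - conj a * z)⁻²`. -/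
def bergb (a : ℂ) : ℂ → ℂ := fun z =>
  ((1 - ‖a‖ ^ 2 : ℝ) : ℂ) * ((1 - conj a * z) ^ 2)⁻¹

/-- The Berezin transform of `ν` relative to the weight `u`:
`ν̃(a) = ‖B_a‖⁻²_{A²(u)} ∫_𝔻 |B_a|² dν`. -/
def berezin (u : ℂ → ℝ) (ν : Measure ℂ) (a : ℂ) : ℝ≥0∞ :=
  (∫⁻ z in unitDisc, (‖bergB a z‖₊ : ℝ≥0∞) ^ 2 ∂ν) / bnorm2 u (bergB a)

/-- The Toeplitz operator with kernel `K` and symbol measure `ν`: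
`T_ν g (z) = ∫_𝔻 K(z,w) g(w) dν(w)`. -/
def toeplitz (K : ℂ → ℂ → ℂ) (ν : Measure ℂ) (g : ℂ → ℂ) : ℂ → ℂ := fun z =>
  ∫ w in unitDisc, K z w * g w ∂ν

/-- Compactness of the inclusion operator `A²(u) → L²(ν)` (sequential form: every sequence in
the unit ball of `A²(u)` has a subsequence that is Cauchy in `L²(ν)`). -/
def InclCompact (u : ℂ → ℝ) (ν : Measure ℂ) : Prop :=
  ∀ f : ℕ → ℂ → ℂ, (∀ n, IsA2 u (f n) ∧ bnorm2 u (f n) ≤ 1) →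
    ∃ φ : ℕ → ℕ, StrictMono φ ∧ ∀ ε : ℝ, 0 < ε → ∃ N, ∀ m ≥ N, ∀ n ≥ N,
      (∫⁻ z in unitDisc, (‖f (φ m) z - f (φ n) z‖₊ : ℝ≥0∞) ^ 2 ∂ν) < ENNReal.ofReal ε

/-- Compactness of an operator `T : A²(u) → A²(u)` (sequential form: `T` maps `A²(u)` into
itself and every sequence in the unit ball of `A²(u)` has a subsequence whose image under `T`
is Cauchy in `A²(u)`). -/
def OpCompact (u : ℂ → ℝ) (T : (ℂ → ℂ) → ℂ → ℂ) : Prop :=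
  (∀ g, IsA2 u g → IsA2 u (T g)) ∧
  ∀ f : ℕ → ℂ → ℂ, (∀ n, IsA2 u (f n) ∧ bnorm2 u (f n) ≤ 1) →
    ∃ φ : ℕ → ℕ, StrictMono φ ∧ ∀ ε : ℝ, 0 < ε → ∃ N, ∀ m ≥ N, ∀ n ≥ N,
      bnorm2 u (fun z => T (f (φ m)) z - T (f (φ n)) z) < ENNReal.ofReal ε


/-!
Reproducing property and Cauchy–Schwarz give `|g(a)| ≤ ‖g‖ ‖K_a‖` for every `g ∈ A²(u)`.
For `ζ` on the unit circle, the peak function `φ_ζ(z) = (1 + ζ̄ z)/2` satisfies `|φ_ζ| < 1` on `𝔻`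
and `φ_ζ(ζ) = 1`, so `‖f φ_ζ^m‖ → 0` by dominated convergence while `|φ_ζ(a)|^m > 1/2` for `a`
near `ζ`. Applying the bound to `g = f φ_ζ^m` gives `|f(a)| / ‖K_a‖ < 2 ‖f φ_ζ^m‖` near `ζ`, and
compactness of the circle makes this uniform on an annulus `δ < |a| < 1`.
-/

section AnnulusOfSphere

variable {E : Type*} [NormedAddCommGroup E] [NormedSpace ℝ E] [ProperSpace E]

lemma exists_forall_norm_gt_of_forall_sphere_eventually {P : E → Prop}
    (h : ∀ ζ ∈ Metric.sphere (0 : E) 1, ∀ᶠ a in 𝓝 ζ, P a) :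
    ∃ δ ∈ Ioo (0 : ℝ) 1, ∀ a ∈ Metric.ball (0 : E) 1, δ < ‖a‖ → P a := by
  obtain ⟨r, hr, hP⟩ :=
    (Metric.hasBasis_nhdsSet_thickening (isCompact_sphere (0 : E) 1)).eventually_iff.1
      (eventually_nhdsSet_iff_forall.2 h)
  refine ⟨max (1 - r) (1 / 2), ⟨by positivity, max_lt (by linarith) (by norm_num)⟩,
    fun a ha hδa => hP (Metric.mem_thickening_iff.2 ⟨‖a‖⁻¹ • a, ?_, ?_⟩)⟩
  all_goals have ha0 : 0 < ‖a‖ := by linarith [le_max_right (1 - r) (1 / 2)]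
  · simp [norm_smul, ha0.ne']
  · have ha1 : ‖a‖ < 1 := mem_ball_zero_iff.1 ha
    have hproj : a - ‖a‖⁻¹ • a = (1 - ‖a‖⁻¹) • a := by rw [sub_smul, one_smul]
    rw [dist_eq_norm, hproj, norm_smul, Real.norm_eq_abs,
      abs_of_nonpos (sub_nonpos.2 (one_le_inv₀ ha0 |>.2 ha1.le)),
      neg_sub, sub_mul, inv_mul_cancel₀ ha0.ne', one_mul]
    linarith [le_max_left (1 - r) (1 / 2)]

end AnnulusOfSphere

lemma Anorm_nonneg (u : ℂ → ℝ) (f : ℂ → ℂ) : 0 ≤ Anorm u f := Real.sqrt_nonneg _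

lemma norm_integral_mul_conj_le_Anorm_mul {u : ℂ → ℝ} (hu_nonneg : ∀ z ∈ unitDisc, 0 ≤ u z)
    (hu : AEMeasurable u (dA.restrict unitDisc)) {g k : ℂ → ℂ}
    (hg : AEMeasurable g (dA.restrict unitDisc)) (hk : AEMeasurable k (dA.restrict unitDisc))
    (hg2 : bnorm2 u g ≠ ⊤) (hk2 : bnorm2 u k ≠ ⊤) :
    ‖∫ z in unitDisc, g z * conj (k z) * (u z : ℂ) ∂dA‖ ≤ Anorm u g * Anorm u k := by
  have hsq : ∀ h : ℂ → ℂ, ∀ z, ((‖h z‖₊ : ℝ≥0∞) * ENNReal.ofReal √(u z)) ^ (2 : ℝ) =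
      (‖h z‖₊ : ℝ≥0∞) ^ 2 * ENNReal.ofReal (u z) := by
    intro h z
    rw [ENNReal.rpow_two, mul_pow, ← ENNReal.ofReal_pow (Real.sqrt_nonneg _), Real.sq_sqrt',
      ENNReal.ofReal_max, ENNReal.ofReal_zero, max_zero]
  have hHolder := ENNReal.lintegral_mul_le_Lp_mul_Lq (dA.restrict unitDisc)
    Real.HolderConjugate.two_two
    (hg.nnnorm.coe_nnreal_ennreal.mul hu.sqrt.ennreal_ofReal)
    (hk.nnnorm.coe_nnreal_ennreal.mul hu.sqrt.ennreal_ofReal)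
  simp only [Pi.mul_apply, hsq] at hHolder
  have hint : ‖∫ z in unitDisc, g z * conj (k z) * (u z : ℂ) ∂dA‖ₑ ≤
      bnorm2 u g ^ (1 / 2 : ℝ) * bnorm2 u k ^ (1 / 2 : ℝ) := calc
    _ ≤ ∫⁻ z in unitDisc, ‖g z * conj (k z) * (u z : ℂ)‖ₑ ∂dA :=
      enorm_integral_le_lintegral_enorm _
    _ = ∫⁻ z in unitDisc, (‖g z‖₊ : ℝ≥0∞) * ENNReal.ofReal √(u z) *
          ((‖k z‖₊ : ℝ≥0∞) * ENNReal.ofReal √(u z)) ∂dA := by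
      refine setLIntegral_congr_fun measurableSet_ball fun z hz => ?_
      have hsplit : ENNReal.ofReal (u z) = ENNReal.ofReal √(u z) * ENNReal.ofReal √(u z) := by
        rw [← ENNReal.ofReal_mul (Real.sqrt_nonneg _), Real.mul_self_sqrt (hu_nonneg z hz)]
      rw [enorm_mul, enorm_mul, RCLike.enorm_conj, ← ofReal_norm (u z : ℂ), Complex.norm_real,
        Real.norm_of_nonneg (hu_nonneg z hz), hsplit, enorm_eq_nnnorm, enorm_eq_nnnorm]
      ring
    _ ≤ _ := hHolder
  have hfin : bnorm2 u g ^ (1 / 2 : ℝ) * bnorm2 u k ^ (1 / 2 : ℝ) ≠ ⊤ :=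
    ENNReal.mul_ne_top (ENNReal.rpow_ne_top_of_nonneg (by norm_num) hg2)
      (ENNReal.rpow_ne_top_of_nonneg (by norm_num) hk2)
  calc _ = ‖∫ z in unitDisc, g z * conj (k z) * (u z : ℂ) ∂dA‖ₑ.toReal := (toReal_enorm _).symm
    _ ≤ (bnorm2 u g ^ (1 / 2 : ℝ) * bnorm2 u k ^ (1 / 2 : ℝ)).toReal :=
      ENNReal.toReal_mono hfin hint
    _ = Anorm u g * Anorm u k := by
      rw [ENNReal.toReal_mul, ← ENNReal.toReal_rpow, ← ENNReal.toReal_rpow, Anorm, Anorm,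
        Real.sqrt_eq_rpow, Real.sqrt_eq_rpow]

lemma IsA2.aemeasurable {u : ℂ → ℝ} {f : ℂ → ℂ} (hf : IsA2 u f) :
    AEMeasurable f (dA.restrict unitDisc) :=
  hf.1.continuousOn.aemeasurable measurableSet_ball

lemma norm_apply_le_Anorm_mul_Anorm_of_reproducing {u : ℂ → ℝ}
    (hu_nonneg : ∀ z ∈ unitDisc, 0 ≤ u z) (hu : AEMeasurable u (dA.restrict unitDisc))
    {k : ℂ → ℂ} {a : ℂ} (hk : IsA2 u k)
    (hk_repr : ∀ f, IsA2 u f → (∫ z in unitDisc, f z * conj (k z) * (u z : ℂ) ∂dA) = f a)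
    {f : ℂ → ℂ} (hf : IsA2 u f) :
    ‖f a‖ ≤ Anorm u f * Anorm u k :=
  hk_repr f hf ▸ norm_integral_mul_conj_le_Anorm_mul hu_nonneg hu hf.aemeasurable
    hk.aemeasurable hf.2.ne hk.2.ne

lemma tendsto_bnorm2_mul_pow_atTop_nhds_zero {u : ℂ → ℝ}
    (hu : AEMeasurable u (dA.restrict unitDisc)) {f h : ℂ → ℂ}
    (hf : AEMeasurable f (dA.restrict unitDisc)) (hf2 : bnorm2 u f ≠ ⊤)
    (hh : AEMeasurable h (dA.restrict unitDisc)) (hh1 : ∀ z ∈ unitDisc, ‖h z‖ < 1) :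
    Tendsto (fun m : ℕ => bnorm2 u fun z => f z * h z ^ m) atTop (𝓝 0) := by
  have hintegrand : ∀ m : ℕ, ∀ z, (‖f z * h z ^ m‖₊ : ℝ≥0∞) ^ 2 * ENNReal.ofReal (u z) =
      (‖f z‖₊ : ℝ≥0∞) ^ 2 * ENNReal.ofReal (u z) * ((‖h z‖₊ : ℝ≥0∞) ^ 2) ^ m := by
    intro m z
    rw [nnnorm_mul, nnnorm_pow, ENNReal.coe_mul, ENNReal.coe_pow, mul_pow, ← pow_mul, ← pow_mul,
      mul_comm m 2]
    ring
  have hh1' : ∀ z ∈ unitDisc, (‖h z‖₊ : ℝ≥0∞) ^ 2 < 1 := fun z hz =>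
    pow_lt_one₀ zero_le (by simpa [← NNReal.coe_lt_coe] using hh1 z hz) two_ne_zero
  have hdom := tendsto_lintegral_of_dominated_convergence' (μ := dA.restrict unitDisc)
    (F := fun m z => (‖f z‖₊ : ℝ≥0∞) ^ 2 * ENNReal.ofReal (u z) * ((‖h z‖₊ : ℝ≥0∞) ^ 2) ^ m)
    (f := fun _ => 0) (fun z => (‖f z‖₊ : ℝ≥0∞) ^ 2 * ENNReal.ofReal (u z))
    (fun m => ((hf.nnnorm.coe_nnreal_ennreal.pow_const 2).mul hu.ennreal_ofReal).mul
      ((hh.nnnorm.coe_nnreal_ennreal.pow_const 2).pow_const m))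
    (fun m => (ae_restrict_iff' measurableSet_ball).2 <| Eventually.of_forall fun z hz =>
      mul_le_of_le_one_right zero_le (pow_le_one₀ zero_le (hh1' z hz).le))
    hf2
    ((ae_restrict_iff' measurableSet_ball).2 <| Eventually.of_forall fun z hz => by
      simpa using ENNReal.Tendsto.const_mul
        (ENNReal.tendsto_pow_atTop_nhds_zero_of_lt_one (hh1' z hz))
        (Or.inr (ENNReal.mul_ne_top (by simp) ENNReal.ofReal_ne_top)))
  simpa only [bnorm2, hintegrand, lintegral_zero] using hdom

def peakFunction (ζ : ℂ) (z : ℂ) : ℂ := (1 + conj ζ * z) / 2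

lemma differentiable_peakFunction (ζ : ℂ) : Differentiable ℂ (peakFunction ζ) :=
  ((differentiable_const 1).add ((differentiable_const _).mul differentiable_id)).div_const 2

lemma norm_peakFunction_lt_one {ζ z : ℂ} (hζ : ‖ζ‖ ≤ 1) (hz : ‖z‖ < 1) :
    ‖peakFunction ζ z‖ < 1 := by
  have hnum : ‖1 + conj ζ * z‖ < 2 := calc
    _ ≤ 1 + ‖ζ‖ * ‖z‖ := by simpa using norm_add_le (1 : ℂ) (conj ζ * z)
    _ < 2 := by nlinarith [norm_nonneg ζ, norm_nonneg z]
  rw [peakFunction, norm_div, Complex.norm_two]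
  linarith

lemma peakFunction_self {ζ : ℂ} (hζ : ‖ζ‖ = 1) : peakFunction ζ ζ = 1 := by
  rw [peakFunction, ← Complex.normSq_eq_conj_mul_self, Complex.normSq_eq_norm_sq, hζ]
  norm_num

lemma eventually_norm_apply_div_Anorm_kernel_lt {u : ℂ → ℝ}
    (hu_nonneg : ∀ z ∈ unitDisc, 0 ≤ u z) (hu : AEMeasurable u (dA.restrict unitDisc))
    {K : ℂ → ℂ → ℂ} (hK_mem : ∀ a ∈ unitDisc, IsA2 u fun z => K z a)
    (hK_repr : ∀ a ∈ unitDisc, ∀ f, IsA2 u f →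
      (∫ z in unitDisc, f z * conj (K z a) * (u z : ℂ) ∂dA) = f a)
    {f : ℂ → ℂ} (hf : IsA2 u f) {ε : ℝ} (hε : 0 < ε) {ζ : ℂ} (hζ : ‖ζ‖ = 1) :
    ∀ᶠ a in 𝓝 ζ, a ∈ unitDisc → ‖f a‖ / Anorm u (fun z => K z a) < ε := by
  obtain ⟨m, hm⟩ := ((tendsto_bnorm2_mul_pow_atTop_nhds_zero hu hf.aemeasurable hf.2.ne
    (differentiable_peakFunction ζ).continuous.aemeasurable
    fun z hz => norm_peakFunction_lt_one hζ.le (mem_ball_zero_iff.1 hz)).eventually_lt_const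
      (ENNReal.ofReal_pos.2 (by positivity : 0 < (ε / 2) ^ 2))).exists
  set g := fun z => f z * peakFunction ζ z ^ m
  have hg : IsA2 u g :=
    ⟨hf.1.mul ((differentiable_peakFunction ζ).pow m).differentiableOn,
      hm.trans ENNReal.ofReal_lt_top⟩
  have hg_small : Anorm u g < ε / 2 := by
    rw [Anorm, Real.sqrt_lt' (by positivity)]
    exact ENNReal.toReal_lt_of_lt_ofReal hm
  have hpeak : ∀ᶠ a in 𝓝 ζ, 1 / 2 < ‖peakFunction ζ a‖ ^ m := by
    have hcont : Continuous fun a => ‖peakFunction ζ a‖ ^ m :=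
      ((differentiable_peakFunction ζ).continuous.norm).pow m
    refine (hcont.tendsto ζ).eventually_const_lt ?_
    rw [peakFunction_self hζ, norm_one, one_pow]
    norm_num
  filter_upwards [hpeak] with a hpeak_a ha
  have hga : ‖f a‖ * ‖peakFunction ζ a‖ ^ m ≤ Anorm u g * Anorm u (fun z => K z a) := by
    simpa [g, norm_mul, norm_pow] using
      norm_apply_le_Anorm_mul_Anorm_of_reproducing hu_nonneg hu (hK_mem a ha) (hK_repr a ha) hg
  -- a vanishing kernel norm gives the junk quotient `‖f a‖ / 0 = 0`
  rcases (Anorm_nonneg u fun z => K z a).eq_or_lt with hK0 | hKpos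
  · rwa [← hK0, div_zero]
  rw [div_lt_iff₀ hKpos]
  nlinarith [norm_nonneg (f a)]

theorem normalized_kernels_weakly_null_general
    (u : ℂ → ℝ) (hu_nonneg : ∀ z ∈ unitDisc, 0 ≤ u z)
    (hu_int : IntegrableOn u unitDisc dA)
    (K : ℂ → ℂ → ℂ)
    (hK_mem : ∀ a ∈ unitDisc, IsA2 u fun z => K z a)
    (hK_repr : ∀ a ∈ unitDisc, ∀ f, IsA2 u f →
      (∫ z in unitDisc, f z * conj (K z a) * (u z : ℂ) ∂dA) = f a) :
    ∀ f, IsA2 u f → ∀ ε : ℝ, 0 < ε → ∃ δ ∈ Set.Ioo (0 : ℝ) 1, ∀ a ∈ unitDisc,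
      δ < ‖a‖ →
        ‖∫ z in unitDisc, f z * conj (K z a) * (u z : ℂ) ∂dA‖ /
          Anorm u (fun z => K z a) < ε := by
  intro f hf ε hε
  obtain ⟨δ, hδ, hnear⟩ := exists_forall_norm_gt_of_forall_sphere_eventually fun ζ hζ =>
    eventually_norm_apply_div_Anorm_kernel_lt hu_nonneg hu_int.aemeasurable hK_mem hK_repr hf hε
      (mem_sphere_zero_iff_norm.1 hζ)
  refine ⟨δ, hδ, fun a ha hδa => ?_⟩
  rw [hK_repr a ha f hf]
  exact hnear a ha hδa ha

/-- If `u ∈ L¹(𝔻)` satisfies `B₂` and `K_u(·,a)` is the reproducing kernel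
of `A²(u)` at `a`, then the normalized reproducing kernels `K_u(·,a)/‖K_u(·,a)‖_{A²(u)}`
converge to zero weakly in `A²(u)` as `|a| → 1⁻`. -/
theorem normalized_kernels_weakly_null
    (u : ℂ → ℝ) (hu_nonneg : ∀ z ∈ unitDisc, 0 ≤ u z)
    (hu_int : IntegrableOn u unitDisc dA)
    (hB2 : BekolleBonami2 u)
    (K : ℂ → ℂ → ℂ)
    (hK_mem : ∀ a ∈ unitDisc, IsA2 u fun z => K z a)
    (hK_repr : ∀ a ∈ unitDisc, ∀ f, IsA2 u f →
      (∫ z in unitDisc, f z * conj (K z a) * (u z : ℂ) ∂dA) = f a) :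
    ∀ f, IsA2 u f → ∀ ε : ℝ, 0 < ε → ∃ δ ∈ Set.Ioo (0 : ℝ) 1, ∀ a ∈ unitDisc,
      δ < ‖a‖ →
        ‖∫ z in unitDisc, f z * conj (K z a) * (u z : ℂ) ∂dA‖ /
          Anorm u (fun z => K z a) < ε :=
  normalized_kernels_weakly_null_general u hu_nonneg hu_int K hK_mem hK_repr
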